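/- Let X be a profinite group, Y a closed normal subgroup of X, and Σ a finite simple group. If Σ occurs in X (i.e., there exist closed subgroups X₂ ⊴ X₁ ≤ X with X₁/X₂ ≅ Σ), then Σ occurs in Y or Σ occurs in X/Y. -/

import Mathlib

/-!
Present the occurrence of `S` as a surjection `φ : X₁ →* S` with kernel `X₂`. Since `S` is simple,
the normal subgroup `φ (Y ∩ X₁)` of `S` is trivial or everything. If it is everything, `φ`
restricted to `Y ∩ X₁` exhibits `S` in `Y`. If it is trivial, `Y ∩ X₁ ≤ X₂`, so `φ` factors
through the image of `X₁` in `X ⧸ Y`, which exhibits `S` in `X ⧸ Y`; the images of `X₁` and `X₂`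
are closed because `X` is compact and `X ⧸ Y` is Hausdorff.
-/

/-- A finite simple group `S` *occurs* in a topological group `G` if there exist closed
subgroups `G₂ ⊴ G₁ ≤ G` with `G₁ ⧸ G₂ ≅ S`. -/
def OccursIn (S : Type*) [Group S] (G : Type*) [Group G] [TopologicalSpace G] : Prop :=
  ∃ (G₁ G₂ : Subgroup G) (_ : IsClosed (G₁ : Set G)) (_ : IsClosed (G₂ : Set G)) (_ : G₂ ≤ G₁)
    (hnorm : (G₂.subgroupOf G₁).Normal),
      letI := hnorm
      Nonempty ((G₁ ⧸ G₂.subgroupOf G₁) ≃* S)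

theorem Subgroup.map_subgroupMap_subgroupOf {G H : Type*} [Group G] [Group H] (f : G →* H)
    {G₁ G₂ : Subgroup G} (hle : G₂ ≤ G₁) :
    (G₂.subgroupOf G₁).map (f.subgroupMap G₁) = (G₂.map f).subgroupOf (G₁.map f) := by
  ext ⟨y, hy⟩
  simp only [Subgroup.mem_map, Subgroup.mem_subgroupOf]
  constructor
  · rintro ⟨x, hx, hxy⟩
    exact ⟨x, hx, congrArg Subtype.val hxy⟩
  · rintro ⟨x, hx, rfl⟩
    exact ⟨⟨x, hle hx⟩, hx, rfl⟩

section Surjection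

variable {S : Type*} [Group S] {G : Type*} [Group G] {G₁ G₂ : Subgroup G} {φ : G₁ →* S}

theorem exists_surjective_subgroupOf_of_map_eq_top (hker : φ.ker = G₂.subgroupOf G₁)
    {K : Subgroup G} (hK : (K.subgroupOf G₁).map φ = ⊤) :
    ∃ ψ : G₁.subgroupOf K →* S, Function.Surjective ψ ∧
      ψ.ker = (G₂.subgroupOf K).subgroupOf (G₁.subgroupOf K) := by
  let ι : G₁.subgroupOf K →* G₁ :=
    (K.subtype.comp (G₁.subgroupOf K).subtype).codRestrict G₁ fun x => x.2
  refine ⟨φ.comp ι, fun s => ?_, ?_⟩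
  · obtain ⟨x, hxK, rfl⟩ : s ∈ (K.subgroupOf G₁).map φ := hK ▸ Subgroup.mem_top s
    exact ⟨⟨⟨x, hxK⟩, x.2⟩, rfl⟩
  · rw [← MonoidHom.comap_ker, hker]
    rfl

theorem exists_surjective_map_of_ker_le {H : Type*} [Group H] (hφ : Function.Surjective φ)
    (hker : φ.ker = G₂.subgroupOf G₁) (hle : G₂ ≤ G₁) (f : G →* H)
    (hf : f.ker.subgroupOf G₁ ≤ G₂.subgroupOf G₁) :
    ∃ ψ : G₁.map f →* S, Function.Surjective ψ ∧
      ψ.ker = (G₂.map f).subgroupOf (G₁.map f) := by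
  let r : G₁ →* G₁.map f := f.subgroupMap G₁
  have hr : Function.Surjective r := f.subgroupMap_surjective G₁
  have hrφ : r.ker ≤ φ.ker := by rwa [Subgroup.ker_subgroupMap, hker]
  let ψ := r.liftOfSurjective hr ⟨φ, hrφ⟩
  have hψ : ψ.comp r = φ := r.liftOfRightInverse_comp _ _ _
  refine ⟨ψ, .of_comp (g := r) (by rwa [← MonoidHom.coe_comp, hψ]), ?_⟩
  rw [← Subgroup.map_comap_eq_self_of_surjective hr ψ.ker, MonoidHom.comap_ker, hψ, hker,
    Subgroup.map_subgroupMap_subgroupOf f hle]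

end Surjection

section Occurrence

variable {S : Type*} [Group S] {G : Type*} [Group G] [TopologicalSpace G]

theorem OccursIn.exists_surjective (h : OccursIn S G) :
    ∃ (G₁ G₂ : Subgroup G) (_ : IsClosed (G₁ : Set G)) (_ : IsClosed (G₂ : Set G))
      (_ : G₂ ≤ G₁) (φ : G₁ →* S), Function.Surjective φ ∧ φ.ker = G₂.subgroupOf G₁ := by
  obtain ⟨G₁, G₂, h₁, h₂, hle, hnorm, ⟨e⟩⟩ := h
  refine ⟨G₁, G₂, h₁, h₂, hle, e.toMonoidHom.comp (QuotientGroup.mk' _),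
    e.surjective.comp (QuotientGroup.mk'_surjective _), ?_⟩
  rw [← MonoidHom.comap_ker, MonoidHom.ker_eq_bot _ e.injective, MonoidHom.comap_bot,
    QuotientGroup.ker_mk']

theorem occursIn_of_surjective {G₁ G₂ : Subgroup G} (h₁ : IsClosed (G₁ : Set G))
    (h₂ : IsClosed (G₂ : Set G)) (hle : G₂ ≤ G₁) {φ : G₁ →* S} (hφ : Function.Surjective φ)
    (hker : φ.ker = G₂.subgroupOf G₁) : OccursIn S G := by
  have : (G₂.subgroupOf G₁).Normal := hker ▸ φ.normal_ker
  exact ⟨G₁, G₂, h₁, h₂, hle, this, ⟨(QuotientGroup.quotientMulEquivOfEq hker.symm).trans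
    (QuotientGroup.quotientKerEquivOfSurjective φ hφ)⟩⟩

variable {G₁ G₂ : Subgroup G} (h₁ : IsClosed (G₁ : Set G)) (h₂ : IsClosed (G₂ : Set G))
  (hle : G₂ ≤ G₁) {φ : G₁ →* S} (hker : φ.ker = G₂.subgroupOf G₁)
include h₁ h₂ hle hker

theorem occursIn_of_map_subgroupOf_eq_top {K : Subgroup G}
    (hK : (K.subgroupOf G₁).map φ = ⊤) : OccursIn S K := by
  obtain ⟨ψ, hψ, hψker⟩ := exists_surjective_subgroupOf_of_map_eq_top hker hK
  exact occursIn_of_surjective (h₁.preimage continuous_subtype_val)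
    (h₂.preimage continuous_subtype_val) (fun _ hx => hle hx) hψ hψker

theorem occursIn_of_ker_subgroupOf_le [CompactSpace G] {H : Type*} [Group H]
    [TopologicalSpace H] [T2Space H] (hφ : Function.Surjective φ) (f : G →* H)
    (hf : Continuous f) (hfker : f.ker.subgroupOf G₁ ≤ G₂.subgroupOf G₁) : OccursIn S H := by
  obtain ⟨ψ, hψ, hψker⟩ := exists_surjective_map_of_ker_le hφ hker hle f hfker
  refine occursIn_of_surjective ?_ ?_ (Subgroup.map_mono hle) hψ hψker <;>
    rw [Subgroup.coe_map]
  exacts [(h₁.isCompact.image hf).isClosed, (h₂.isCompact.image hf).isClosed]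

end Occurrence

theorem occursIn_or_of_closed_normal_general
    {X : Type*} [Group X] [TopologicalSpace X] [IsTopologicalGroup X]
    [CompactSpace X]
    {S : Type*} [Group S] (hS : IsSimpleGroup S)
    (Y : Subgroup X) (hn : Y.Normal) (hcl : IsClosed (Y : Set X))
    (h : OccursIn S X) : OccursIn S Y ∨ OccursIn S (X ⧸ Y) := by
  obtain ⟨X₁, X₂, h₁, h₂, hle, φ, hφ, hker⟩ := h.exists_surjective
  rcases ((hn.subgroupOf X₁).map φ hφ).eq_bot_or_eq_top with hbot | htop
  · have : IsClosed (Y : Set X) := hcl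
    refine .inr (occursIn_of_ker_subgroupOf_le h₁ h₂ hle hker hφ (QuotientGroup.mk' Y)
      continuous_quot_mk ?_)
    rw [QuotientGroup.ker_mk', ← hker]
    exact (Subgroup.map_eq_bot_iff _).mp hbot
  · exact .inl (occursIn_of_map_subgroupOf_eq_top h₁ h₂ hle hker htop)

/-- If `X` is a profinite group, `Y` a closed normal subgroup, and the finite simple group `S`
occurs in `X`, then `S` occurs in `Y` or in `X ⧸ Y`. -/
theorem occursIn_or_of_closed_normal
    {X : Type*} [Group X] [TopologicalSpace X] [IsTopologicalGroup X]
    [CompactSpace X] [TotallyDisconnectedSpace X] [T2Space X]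
    {S : Type*} [Group S] [Finite S] (hS : IsSimpleGroup S)
    (Y : Subgroup X) (hn : Y.Normal) (hcl : IsClosed (Y : Set X))
    (h : OccursIn S X) : OccursIn S Y ∨ OccursIn S (X ⧸ Y) :=
  occursIn_or_of_closed_normal_general hS Y hn hcl h
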